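/- In Q(q), with δ = [3][8][13][18]/([4][6][9]) and [n] = (q^n - q^{-n})/(q - q^{-1}), the quantity z_1 = (q^{10}+q^{-10})(q^6+q^{-6})(q^{-8}-q^8)/(δ - q^4 - q^{-4}) equals (q^{-4}-q^4)/[3]. -/
import Mathlib


/-- The generator q of the field of rational functions ℚ(q). -/
noncomputable def q : RatFunc ℚ := RatFunc.X

/-- The quantum integer [n] = (q^n - q^{-n})/(q - q^{-1}) in ℚ(q). -/
noncomputable def qint (n : ℤ) : RatFunc ℚ := (q ^ n - q ^ (-n)) / (q - q⁻¹)

/-- δ = [3][8][13][18]/([4][6][9]). -/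
noncomputable def deltaF4 : RatFunc ℚ :=
  qint 3 * qint 8 * qint 13 * qint 18 / (qint 4 * qint 6 * qint 9)

/-- φ = [2][7][12]/([4][6]). -/
noncomputable def phiF4 : RatFunc ℚ := qint 2 * qint 7 * qint 12 / (qint 4 * qint 6)

lemma hq0 : q ≠ 0 := RatFunc.X_ne_zero

lemma pol_ne (p : Polynomial ℚ) (h : p.eval 2 ≠ 0) :
    algebraMap (Polynomial ℚ) (RatFunc ℚ) p ≠ 0 := by
  apply RatFunc.algebraMap_ne_zero
  intro hp; rw [hp] at h; simp at h

lemma qpow_sub_one_ne (k : ℕ) (h : (2:ℚ)^k - 1 ≠ 0) : q ^ k - 1 ≠ 0 := by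
  have hrw : q ^ k - 1 = algebraMap (Polynomial ℚ) (RatFunc ℚ) (Polynomial.X ^ k - 1) := by
    simp [q, map_sub, map_pow, RatFunc.algebraMap_X]
  rw [hrw]
  exact pol_ne _ (by simpa using h)

lemma qpow_add_one_ne (k : ℕ) : q ^ k + 1 ≠ 0 := by
  have hrw : q ^ k + 1 = algebraMap (Polynomial ℚ) (RatFunc ℚ) (Polynomial.X ^ k + 1) := by
    simp [q, map_add, map_pow, RatFunc.algebraMap_X]
  rw [hrw]
  refine pol_ne _ ?_
  simp
  positivity

lemma h2ne : q ^ 2 - 1 ≠ 0 := qpow_sub_one_ne 2 (by norm_num)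

lemma hqq : q - q⁻¹ ≠ 0 := by
  have hrw : q - q⁻¹ = (q ^ 2 - 1) / q := by
    field_simp [hq0]
  rw [hrw]
  exact div_ne_zero h2ne hq0

lemma qint_eval (m : ℕ) :
    qint (m + 1) = (q ^ (2 * (m + 1)) - 1) / (q ^ m * (q ^ 2 - 1)) := by
  unfold qint
  have hcast : ((m : ℤ) + 1) = ((m + 1 : ℕ) : ℤ) := by push_cast; ring
  rw [hcast, zpow_neg, zpow_natCast]
  rw [div_eq_div_iff hqq (mul_ne_zero (pow_ne_zero _ hq0) h2ne)]
  field_simp [hq0]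
  ring

lemma qpow_add_inv_ne (n : ℕ) : q ^ n + (q ^ n)⁻¹ ≠ 0 := by
  have h2 := qpow_add_one_ne (2 * n)
  have hrw : q ^ n + (q ^ n)⁻¹ = (q ^ (2 * n) + 1) / q ^ n := by
    field_simp [hq0]
    ring
  rw [hrw]
  exact div_ne_zero h2 (pow_ne_zero _ hq0)

lemma qint3_eval : qint 3 = (q ^ 6 - 1) / (q ^ 2 * (q ^ 2 - 1)) := by
  have h := qint_eval 2; norm_num at h; exact h

lemma qint3_ne : qint 3 ≠ 0 := by
  rw [qint3_eval]
  exact div_ne_zero (qpow_sub_one_ne 6 (by norm_num))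
    (mul_ne_zero (pow_ne_zero _ hq0) h2ne)

lemma qpow_eval (k : ℕ) : q ^ (k : ℤ) + q ^ (-(k : ℤ)) = (q ^ (2 * k) + 1) / q ^ k := by
  rw [zpow_neg, zpow_natCast, eq_div_iff (pow_ne_zero k hq0), add_mul,
    inv_mul_cancel₀ (pow_ne_zero k hq0), ← pow_add, two_mul]

set_option maxHeartbeats 1000000 in
lemma delta_key :
    deltaF4 - q ^ (4 : ℤ) - q ^ (-4 : ℤ)
      = (q ^ (10 : ℤ) + q ^ (-10 : ℤ)) * (q ^ (6 : ℤ) + q ^ (-6 : ℤ)) *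
          (q ^ (4 : ℤ) + q ^ (-4 : ℤ)) * qint 3 := by
  have e3 := qint3_eval
  have e4 := qint_eval 3; norm_num at e4
  have e6 := qint_eval 5; norm_num at e6
  have e8 := qint_eval 7; norm_num at e8
  have e9 := qint_eval 8; norm_num at e9
  have e13 := qint_eval 12; norm_num at e13
  have e18 := qint_eval 17; norm_num at e18
  have p4 : q ^ (4:ℕ) + (q ^ (4:ℕ))⁻¹ = (q ^ (8:ℕ) + 1) / q ^ (4:ℕ) := by
    simpa using qpow_eval 4
  have p6 : q ^ (6:ℕ) + (q ^ (6:ℕ))⁻¹ = (q ^ (12:ℕ) + 1) / q ^ (6:ℕ) := by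
    simpa using qpow_eval 6
  have p10 : q ^ (10:ℕ) + (q ^ (10:ℕ))⁻¹ = (q ^ (20:ℕ) + 1) / q ^ (10:ℕ) := by
    simpa using qpow_eval 10
  have hqp : ∀ k : ℕ, (q : RatFunc ℚ) ^ k ≠ 0 := fun k => pow_ne_zero _ hq0
  have hnum : qint 3 * qint 8 * qint 13 * qint 18
      = ((q ^ 6 - 1) * (q ^ 16 - 1) * (q ^ 26 - 1) * (q ^ 36 - 1)) /
        ((q ^ 2 * (q ^ 2 - 1)) * (q ^ 7 * (q ^ 2 - 1)) * (q ^ 12 * (q ^ 2 - 1)) *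
          (q ^ 17 * (q ^ 2 - 1))) := by
    rw [e3, e8, e13, e18, div_mul_div_comm, div_mul_div_comm, div_mul_div_comm]
  have hden : qint 4 * qint 6 * qint 9
      = ((q ^ 8 - 1) * (q ^ 12 - 1) * (q ^ 18 - 1)) /
        ((q ^ 3 * (q ^ 2 - 1)) * (q ^ 5 * (q ^ 2 - 1)) * (q ^ 8 * (q ^ 2 - 1))) := by
    rw [e4, e6, e9, div_mul_div_comm, div_mul_div_comm]
  have hdelta : deltaF4
      = (((q ^ 6 - 1) * (q ^ 16 - 1) * (q ^ 26 - 1) * (q ^ 36 - 1)) *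
          ((q ^ 3 * (q ^ 2 - 1)) * (q ^ 5 * (q ^ 2 - 1)) * (q ^ 8 * (q ^ 2 - 1)))) /
        (((q ^ 2 * (q ^ 2 - 1)) * (q ^ 7 * (q ^ 2 - 1)) * (q ^ 12 * (q ^ 2 - 1)) *
            (q ^ 17 * (q ^ 2 - 1))) *
          ((q ^ 8 - 1) * (q ^ 12 - 1) * (q ^ 18 - 1))) := by
    unfold deltaF4
    rw [hnum, hden, div_div_eq_mul_div, div_mul_eq_mul_div, div_div]
  have hG : ((q ^ 2 * (q ^ 2 - 1)) * (q ^ 7 * (q ^ 2 - 1)) * (q ^ 12 * (q ^ 2 - 1)) *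
        (q ^ 17 * (q ^ 2 - 1))) *
      ((q ^ 8 - 1) * (q ^ 12 - 1) * (q ^ 18 - 1)) ≠ 0 := by
    refine mul_ne_zero (mul_ne_zero (mul_ne_zero (mul_ne_zero ?_ ?_) ?_) ?_)
      (mul_ne_zero (mul_ne_zero ?_ ?_) ?_) <;>
      first
        | exact mul_ne_zero (hqp _) h2ne
        | exact qpow_sub_one_ne _ (by norm_num)
  simp only [zpow_neg, zpow_ofNat]
  rw [sub_sub, p4, hdelta, p10, p6, qint3_eval,
    div_mul_div_comm, div_mul_div_comm, div_mul_div_comm,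
    div_sub_div _ _ hG (hqp 4),
    div_eq_div_iff (mul_ne_zero hG (hqp 4))
      (mul_ne_zero (mul_ne_zero (mul_ne_zero (hqp 10) (hqp 6)) (hqp 4))
        (mul_ne_zero (hqp 2) h2ne))]
  ring

/-- z₁ = (q^10+q^{-10})(q^6+q^{-6})(q^{-8}-q^8)/(δ - q^4 - q^{-4}) = (q^{-4}-q^4)/[3]. -/
theorem z1_identity :
    (q ^ (10 : ℤ) + q ^ (-10 : ℤ)) * (q ^ (6 : ℤ) + q ^ (-6 : ℤ)) *
        (q ^ (-8 : ℤ) - q ^ (8 : ℤ)) / (deltaF4 - q ^ (4 : ℤ) - q ^ (-4 : ℤ))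
      = (q ^ (-4 : ℤ) - q ^ (4 : ℤ)) / qint 3 := by
  rw [delta_key]
  have hN : (q ^ (10 : ℤ) + q ^ (-10 : ℤ)) * (q ^ (6 : ℤ) + q ^ (-6 : ℤ)) *
      (q ^ (-8 : ℤ) - q ^ (8 : ℤ))
      = ((q ^ (10 : ℤ) + q ^ (-10 : ℤ)) * (q ^ (6 : ℤ) + q ^ (-6 : ℤ)) *
          (q ^ (4 : ℤ) + q ^ (-4 : ℤ))) * (q ^ (-4 : ℤ) - q ^ (4 : ℤ)) := by
    simp only [zpow_neg, zpow_ofNat]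
    field_simp [hq0]
    ring
  rw [hN]
  have hP : (q ^ (10 : ℤ) + q ^ (-10 : ℤ)) * (q ^ (6 : ℤ) + q ^ (-6 : ℤ)) *
      (q ^ (4 : ℤ) + q ^ (-4 : ℤ)) ≠ 0 := by
    simp only [zpow_neg, zpow_ofNat]
    exact mul_ne_zero (mul_ne_zero (qpow_add_inv_ne 10) (qpow_add_inv_ne 6))
      (qpow_add_inv_ne 4)
  rw [mul_div_mul_left _ _ hP]
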